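/- For every n ≥ 0, the number of covering pairs H(n,1) in the Fibonacci cube of order n satisfies H(n,1) = Σ_{k=1}^{⌈n/2⌉} k · C(n - k + 1, k). -/

import Mathlib

/-!
Every `T` covered by an independent set `S` is `S` minus one of its points, and is again
independent; so `coverCount n h` is the total size of the independent sets, i.e.
`∑ k, k * #(IndepK n h k)`. Splitting the `k`-sets in `{1, …, n + 1}` by whether they contain
`n + 1` gives the Pascal-type recurrence
`#(IndepK (n + 1) h (k + 1)) = #(IndepK n h (k + 1)) + #(IndepK (n - h) h k)`, solved by
`#(IndepK n h k) = C(n - (k - 1) h, k)`. For `h = 1` the summand `k * C(n + 1 - k, k)` vanishes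
unless `1 ≤ k ≤ (n + 1) / 2`.
-/

open Finset

/-- The independent subsets of the h-th power of the path on vertices {1,...,n}:
subsets of {1,...,n} in which any two distinct elements differ by more than h. -/
def Indep (n h : ℕ) : Finset (Finset ℕ) :=
  (Finset.Icc 1 n).powerset.filter (fun S => ∀ a ∈ S, ∀ b ∈ S, a < b → h < b - a)

/-- The independent k-subsets. -/
def IndepK (n h k : ℕ) : Finset (Finset ℕ) :=
  (Indep n h).filter (fun S => S.card = k)

/-- The number of covering pairs (S,T): T ⊆ S, |S| = |T| + 1, both independent. -/
def coverCount (n h : ℕ) : ℕ :=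
  ((Indep n h ×ˢ Indep n h).filter
    (fun p => p.2 ⊆ p.1 ∧ p.1.card = p.2.card + 1)).card

section
variable {n h k : ℕ} {S T : Finset ℕ}

lemma mem_Indep :
    S ∈ Indep n h ↔ S ⊆ Icc 1 n ∧ ∀ a ∈ S, ∀ b ∈ S, a < b → h < b - a := by
  simp [Indep]

lemma mem_IndepK : S ∈ IndepK n h k ↔ S ∈ Indep n h ∧ #S = k := mem_filter

lemma mem_Indep_of_subset (hS : S ∈ Indep n h) (hTS : T ⊆ S) : T ∈ Indep n h := by
  rw [mem_Indep] at *
  exact ⟨hTS.trans hS.1, fun a ha b hb => hS.2 a (hTS ha) b (hTS hb)⟩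

lemma card_le_of_mem_Indep (hS : S ∈ Indep n h) : #S ≤ n := by
  simpa using card_le_card (mem_Indep.1 hS).1

lemma card_filter_covered_eq_card (hS : S ∈ Indep n h) :
    #{T ∈ Indep n h | T ⊆ S ∧ #S = #T + 1} = #S := by
  obtain hS0 | ⟨m, hm⟩ : #S = 0 ∨ ∃ m, #S = m + 1 := by cases #S <;> simp
  · simp [hS0]
  · have : {T ∈ Indep n h | T ⊆ S ∧ #S = #T + 1} = S.powersetCard m := by
      ext T
      simp only [mem_filter, mem_powersetCard, hm]
      exact ⟨fun ⟨_, hTS, hT⟩ => ⟨hTS, by omega⟩,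
        fun ⟨hTS, hT⟩ => ⟨mem_Indep_of_subset hS hTS, hTS, by omega⟩⟩
    rw [this, card_powersetCard, hm, Nat.choose_succ_self_right]

lemma coverCount_eq_sum_card : coverCount n h = ∑ S ∈ Indep n h, #S := by
  rw [coverCount, card_filter, sum_product]
  refine sum_congr rfl fun S hS => ?_
  rw [← card_filter, card_filter_covered_eq_card hS]

lemma sum_card_Indep_eq_sum_mul_card_IndepK :
    ∑ S ∈ Indep n h, #S = ∑ k ∈ range (n + 1), k * #(IndepK n h k) := by
  rw [← sum_fiberwise_of_maps_to (g := card) (t := range (n + 1))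
    fun S hS => mem_range_succ_iff.2 (card_le_of_mem_Indep hS)]
  refine sum_congr rfl fun k _ => ?_
  rw [sum_congr rfl fun S hS => (mem_filter.1 hS).2, sum_const, smul_eq_mul, mul_comm]
  rfl

lemma filter_notMem_IndepK_succ :
    {S ∈ IndepK (n + 1) h k | n + 1 ∉ S} = IndepK n h k := by
  ext S
  simp only [mem_filter, mem_IndepK, mem_Indep, subset_iff, mem_Icc]
  constructor
  · rintro ⟨⟨⟨hsub, hind⟩, hc⟩, hn⟩
    refine ⟨⟨fun a ha => ?_, hind⟩, hc⟩
    have := hsub ha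
    have : a ≠ n + 1 := fun e => hn (e ▸ ha)
    omega
  · rintro ⟨⟨hsub, hind⟩, hc⟩
    exact ⟨⟨⟨fun a ha => by have := hsub ha; omega, hind⟩, hc⟩,
      fun hn => by have := hsub hn; omega⟩

lemma card_filter_mem_IndepK_succ :
    #{S ∈ IndepK (n + 1) h (k + 1) | n + 1 ∈ S} = #(IndepK (n - h) h k) := by
  refine card_nbij' (·.erase (n + 1)) (insert (n + 1)) ?_ ?_ ?_ ?_
  · intro S hS
    simp only [coe_filter, Set.mem_ofPred_eq, mem_IndepK, mem_Indep, subset_iff, mem_Icc] at hS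
    obtain ⟨⟨⟨hsub, hind⟩, hc⟩, hn⟩ := hS
    simp only [mem_coe, mem_IndepK, mem_Indep, subset_iff, mem_Icc, mem_erase]
    refine ⟨⟨fun a ⟨ha, haS⟩ => ?_, fun a ha b hb => hind a ha.2 b hb.2⟩, ?_⟩
    · have := hsub haS
      have := hind a haS (n + 1) hn (by omega)
      omega
    · rw [card_erase_of_mem hn, hc, Nat.add_sub_cancel]
  · intro T hT
    simp only [mem_coe, mem_IndepK, mem_Indep, subset_iff, mem_Icc] at hT
    obtain ⟨⟨hsub, hind⟩, hc⟩ := hT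
    have hn : n + 1 ∉ T := fun hn => by have := hsub hn; omega
    simp only [coe_filter, Set.mem_ofPred_eq, mem_IndepK, mem_Indep, insert_subset_iff, mem_Icc,
      forall_mem_insert, mem_insert_self, and_true, card_insert_of_notMem hn, hc]
    refine ⟨⟨by omega, fun a ha => mem_Icc.2 (by have := hsub ha; omega)⟩,
      ⟨by omega, fun a ha => by have := hsub ha; omega⟩,
      fun a ha => ⟨fun _ => by have := hsub ha; omega, hind a ha⟩⟩
  · intro S hS
    exact insert_erase (mem_filter.1 hS).2
  · intro T hT
    refine erase_insert fun hn => ?_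
    have := (mem_Indep.1 (mem_IndepK.1 hT).1).1 hn
    simp only [mem_Icc] at this
    omega

lemma card_IndepK_succ_succ :
    #(IndepK (n + 1) h (k + 1)) = #(IndepK n h (k + 1)) + #(IndepK (n - h) h k) := by
  rw [← card_filter_add_card_filter_not (s := IndepK (n + 1) h (k + 1)) (p := (n + 1 ∈ ·)),
    filter_notMem_IndepK_succ, card_filter_mem_IndepK_succ, add_comm]

lemma card_IndepK_zero_right : #(IndepK n h 0) = 1 := by
  rw [card_eq_one]
  refine ⟨∅, eq_singleton_iff_unique_mem.2 ⟨?_, fun S hS => card_eq_zero.1 (mem_IndepK.1 hS).2⟩⟩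
  simp [mem_IndepK, mem_Indep]

lemma IndepK_zero_left_succ : IndepK 0 h (k + 1) = ∅ := by
  refine eq_empty_of_forall_notMem fun S hS => ?_
  have := card_le_of_mem_Indep (mem_IndepK.1 hS).1
  rw [(mem_IndepK.1 hS).2] at this
  omega

end

lemma choose_add_sub_mul_succ (n h k : ℕ) :
    (n + 1 + h - h * (k + 1)).choose (k + 1) =
      (n + h - h * (k + 1)).choose (k + 1) + (n - h + h - h * k).choose k := by
  rcases k with _ | k
  · simp
  have hh : h ≤ h * (k + 1) := Nat.le_mul_of_pos_right h k.succ_pos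
  rw [mul_add_one h (k + 1)]
  by_cases hk : h * (k + 1) ≤ n
  · rw [show n + 1 + h - (h * (k + 1) + h) = n - h * (k + 1) + 1 by omega,
      show n + h - (h * (k + 1) + h) = n - h * (k + 1) by omega,
      show n - h + h - h * (k + 1) = n - h * (k + 1) by omega, Nat.choose_succ_succ', add_comm]
  · rw [show n + 1 + h - (h * (k + 1) + h) = 0 by omega,
      show n + h - (h * (k + 1) + h) = 0 by omega,
      show n - h + h - h * (k + 1) = 0 by omega]
    simp

/-- The classical count $\binom{n-(k-1)h}{k}$, shifted so that truncated subtraction is harmless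
at `k = 0`. -/
theorem card_IndepK (n h k : ℕ) : #(IndepK n h k) = (n + h - h * k).choose k := by
  induction n using Nat.strong_induction_on generalizing k with
  | _ n ih =>
    rcases n, k with ⟨_ | n, _ | k⟩
    · simp [card_IndepK_zero_right]
    · rw [IndepK_zero_left_succ, card_empty, Nat.choose_eq_zero_of_lt]
      have : h ≤ h * (k + 1) := Nat.le_mul_of_pos_right h k.succ_pos
      omega
    · simp [card_IndepK_zero_right]
    · rw [card_IndepK_succ_succ, ih n (by omega), ih (n - h) (by omega), choose_add_sub_mul_succ]

theorem stmt18 (n : ℕ) :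
    coverCount n 1 =
      ∑ k ∈ Finset.Icc 1 ((n + 1) / 2), k * Nat.choose (n - k + 1) k := by
  have hsub : Icc 1 ((n + 1) / 2) ⊆ range (n + 1) := fun k hk => by
    simp only [mem_Icc, mem_range] at hk ⊢
    omega
  have hzero : ∀ k ∈ range (n + 1), k ∉ Icc 1 ((n + 1) / 2) → k * (n + 1 - k).choose k = 0 := by
    intro k _ hk
    simp only [mem_Icc, not_and_or, not_le] at hk
    rcases hk with hk | hk
    · simp [Nat.lt_one_iff.1 hk]
    · rw [Nat.choose_eq_zero_of_lt (by omega), mul_zero]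
  calc coverCount n 1 = ∑ k ∈ range (n + 1), k * (n + 1 - k).choose k := by
        simp only [coverCount_eq_sum_card, sum_card_Indep_eq_sum_mul_card_IndepK, card_IndepK,
          one_mul]
    _ = ∑ k ∈ Icc 1 ((n + 1) / 2), k * (n + 1 - k).choose k := (sum_subset hsub hzero).symm
    _ = _ := sum_congr rfl fun k hk => by
        rw [Nat.sub_add_comm (by simp only [mem_Icc] at hk; omega)]
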